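/- arXiv:1707.04251 — 2 statements merged into one kernel-verified Lean document; each statement's English description precedes it below -/
import Mathlib

section
/- A graph G has a nonempty defensive alliance of size at most k if and only if it has a nonempty defensive alliance of size at most k whose induced subgraph is connected. -/
def closedNbhd {V : Type*} [Fintype V] [DecidableEq V] (G : SimpleGraph V)
    [DecidableRel G.Adj] (v : V) : Finset V :=
  insert v (G.neighborFinset v)

def IsDefensiveAlliance {V : Type*} [Fintype V] [DecidableEq V] (G : SimpleGraph V)
    [DecidableRel G.Adj] (S : Finset V) : Prop :=
  ∀ v ∈ S, (closedNbhd G v \ S).card ≤ (closedNbhd G v ∩ S).card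

open scoped Classical in
private lemma aux_reach {V : Type*} [Fintype V] [DecidableEq V] (G : SimpleGraph V)
    [DecidableRel G.Adj] (S T : Finset V) (v0 : V) (hv0 : v0 ∈ S)
    (hT : ∀ x, x ∈ T ↔ ∃ h : x ∈ S,
      (G.induce (S : Set V)).Reachable ⟨v0, hv0⟩ ⟨x, h⟩) :
    ∀ {a b : ↥(S : Set V)} (_ : (G.induce (S : Set V)).Walk a b)
      (_ : (G.induce (S : Set V)).Reachable ⟨v0, hv0⟩ a)
      (ha' : ↑a ∈ T) (hb' : ↑b ∈ T),
      (G.induce (T : Set V)).Reachable ⟨a, ha'⟩ ⟨b, hb'⟩ := by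
  intro a b p
  induction p with
  | nil =>
    intro _ ha' hb'
    exact SimpleGraph.Reachable.refl _
  | @cons a w b h p ih =>
    intro ha ha' hb'
    have hadj : G.Adj ↑a ↑w := h
    have hwreach : (G.induce (S : Set V)).Reachable ⟨v0, hv0⟩ w :=
      ha.trans h.reachable
    have hw' : ↑w ∈ T := (hT _).2 ⟨w.2, by simpa using hwreach⟩
    have step : (G.induce (T : Set V)).Adj ⟨↑a, ha'⟩ ⟨↑w, hw'⟩ := hadj
    exact step.reachable.trans (ih hwreach hw' hb')

open scoped Classical in
theorem defensiveAlliance_iff_connected_defensiveAlliance {V : Type*} [Fintype V]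
    [DecidableEq V] (G : SimpleGraph V) [DecidableRel G.Adj] (k : ℕ) (hk : 1 ≤ k) :
    (∃ S : Finset V, S.Nonempty ∧ S.card ≤ k ∧ IsDefensiveAlliance G S) ↔
    (∃ S : Finset V, S.Nonempty ∧ S.card ≤ k ∧ IsDefensiveAlliance G S ∧
      (G.induce (S : Set V)).Connected) := by
  constructor
  · rintro ⟨S, hne, hcard, hdef⟩
    obtain ⟨v0, hv0⟩ := hne
    set H := G.induce (S : Set V) with hH
    let T : Finset V := S.filter (fun x => ∃ h : x ∈ S, H.Reachable ⟨v0, hv0⟩ ⟨x, h⟩)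
    have hT : ∀ x, x ∈ T ↔ ∃ h : x ∈ S, H.Reachable ⟨v0, hv0⟩ ⟨x, h⟩ := by
      intro x
      simp only [T, Finset.mem_filter]
      constructor
      · rintro ⟨_, h⟩; exact h
      · rintro ⟨h, hr⟩; exact ⟨h, h, hr⟩
    have hTS : T ⊆ S := Finset.filter_subset _ _
    have hv0T : v0 ∈ T := (hT v0).2 ⟨hv0, SimpleGraph.Reachable.refl _⟩
    -- closed nbhd intersection equality
    have hkey : ∀ u ∈ T, closedNbhd G u ∩ S ⊆ T := by
      intro u hu w hw
      rw [Finset.mem_inter] at hw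
      obtain ⟨hwN, hwS⟩ := hw
      rcases Finset.mem_insert.1 hwN with rfl | hadj
      · exact hu
      · rw [SimpleGraph.mem_neighborFinset] at hadj
        obtain ⟨huS, hur⟩ := (hT u).1 hu
        have : H.Adj ⟨u, huS⟩ ⟨w, hwS⟩ := hadj
        exact (hT w).2 ⟨hwS, hur.trans this.reachable⟩
    have hinter : ∀ u ∈ T, closedNbhd G u ∩ T = closedNbhd G u ∩ S := by
      intro u hu
      apply Finset.Subset.antisymm
      · exact Finset.inter_subset_inter_left hTS
      · intro w hw
        exact Finset.mem_inter.2 ⟨(Finset.mem_inter.1 hw).1, hkey u hu hw⟩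
    have hsdiff : ∀ u ∈ T, closedNbhd G u \ T = closedNbhd G u \ S := by
      intro u hu
      apply Finset.Subset.antisymm
      · intro w hw
        rw [Finset.mem_sdiff] at hw ⊢
        refine ⟨hw.1, fun hwS => hw.2 ?_⟩
        exact hkey u hu (Finset.mem_inter.2 ⟨hw.1, hwS⟩)
      · exact Finset.sdiff_subset_sdiff le_rfl hTS
    refine ⟨T, ⟨v0, hv0T⟩, le_trans (Finset.card_le_card hTS) hcard, ?_, ?_⟩
    · intro u hu
      rw [hinter u hu, hsdiff u hu]
      exact hdef u (hTS hu)
    · have : Nonempty ↥(T : Set V) := ⟨⟨v0, hv0T⟩⟩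
      constructor
      intro a b
      obtain ⟨haS, hra⟩ := (hT _).1 a.2
      obtain ⟨hbS, hrb⟩ := (hT _).1 b.2
      obtain ⟨pa⟩ := hra
      obtain ⟨pb⟩ := hrb
      have h1 : (G.induce (T : Set V)).Reachable ⟨(⟨↑a, haS⟩ : ↥(S : Set V)), a.2⟩
          ⟨(⟨↑b, hbS⟩ : ↥(S : Set V)), b.2⟩ :=
        aux_reach G S T v0 hv0 hT (pa.reverse.append pb) ⟨pa⟩ a.2 b.2
      exact h1
  · rintro ⟨S, hne, hcard, hdef, _⟩
    exact ⟨S, hne, hcard, hdef⟩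
end

section
/- Let G be a graph, k a positive integer, and G' obtained from G by adding, for each vertex f in a designated set F ⊆ V(G), new vertices f', f_1, …, f_{2k} with edges (f, f_i) and (f', f_i) for 1 ≤ i ≤ 2k. Then a set S with 1 ≤ |S| ≤ k is a defensive alliance in G avoiding F if and only if S is a defensive alliance in G' of the same size (and such an S automatically avoids F and all new vertices). -/
/-- The graph G' obtained from G by adding, for each f ∈ F, fresh vertices
f' (= Sum.inr (f, Sum.inl ())) and f_1, …, f_{2k} (= Sum.inr (f, Sum.inr i)),
with edges (f, f_i) and (f', f_i). -/
def extGraphF {V : Type*} [DecidableEq V] (G : SimpleGraph V) (F : Finset V) (k : ℕ) :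
    SimpleGraph (V ⊕ ({x // x ∈ F} × (Unit ⊕ Fin (2 * k)))) where
  Adj x y :=
    match x, y with
    | .inl u, .inl v => G.Adj u v
    | .inl u, .inr (g, .inr _) => u = g.val
    | .inr (g, .inr _), .inl u => u = g.val
    | .inr (g, .inl _), .inr (g', .inr _) => g = g'
    | .inr (g, .inr _), .inr (g', .inl _) => g = g'
    | _, _ => False
  symm := by
    refine ⟨?_⟩
    rintro (u | ⟨g, (u | u)⟩) (v | ⟨g', (v | v)⟩) h <;>
      first | exact G.symm h | exact h | exact h.symm | exact h.elim
  loopless := by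
    refine ⟨?_⟩
    rintro (u | ⟨g, (u | u)⟩) h
    · exact G.loopless.irrefl u h
    · exact h
    · exact h

instance {V : Type*} [DecidableEq V] (G : SimpleGraph V) [DecidableRel G.Adj]
    (F : Finset V) (k : ℕ) : DecidableRel (extGraphF G F k).Adj := fun x y =>
  match x, y with
  | .inl u, .inl v => inferInstanceAs (Decidable (G.Adj u v))
  | .inl u, .inr (g, .inr _) => inferInstanceAs (Decidable (u = g.val))
  | .inr (g, .inr _), .inl u => inferInstanceAs (Decidable (u = g.val))
  | .inr (g, .inl _), .inr (g', .inr _) => inferInstanceAs (Decidable (g = g'))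
  | .inr (g, .inr _), .inr (g', .inl _) => inferInstanceAs (Decidable (g = g'))
  | .inl _, .inr (_, .inl _) => inferInstanceAs (Decidable False)
  | .inr (_, .inl _), .inl _ => inferInstanceAs (Decidable False)
  | .inr (_, .inl _), .inr (_, .inl _) => inferInstanceAs (Decidable False)
  | .inr (_, .inr _), .inr (_, .inr _) => inferInstanceAs (Decidable False)

/-!
Away from `F`, the closed neighbourhood of a vertex of `G` in `G'` is the image of its closed
neighbourhood in `G`, so the two alliance inequalities at that vertex coincide. A vertex `f ∈ F`
of `S` would face its `2k` pendant neighbours `f_i`, all outside `S`, with at most `|S| ≤ k`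
defenders; hence no defensive alliance of `G'` with at most `k` vertices of `G` meets `F`.
-/

section Map

variable {V W : Type*} [Fintype V] [DecidableEq V] [Fintype W] [DecidableEq W]
  {G : SimpleGraph V} [DecidableRel G.Adj] {H : SimpleGraph W} [DecidableRel H.Adj]

theorem isDefensiveAlliance_map_iff {f : V ↪ W} {S : Finset V}
    (hN : ∀ v ∈ S, closedNbhd H (f v) = (closedNbhd G v).map f) :
    IsDefensiveAlliance H (S.map f) ↔ IsDefensiveAlliance G S := by
  unfold IsDefensiveAlliance
  rw [Finset.forall_mem_map]
  refine forall₂_congr fun v hv => ?_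
  rw [hN v hv, ← Finset.map_sdiff, ← Finset.map_inter, Finset.card_map, Finset.card_map]

end Map

section ExtGraph

variable {V : Type*} [Fintype V] [DecidableEq V] {G : SimpleGraph V} [DecidableRel G.Adj]
  {F : Finset V} {k : ℕ}

theorem neighborFinset_extGraphF_inl {v : V} (hv : v ∉ F) :
    (extGraphF G F k).neighborFinset (.inl v) =
      (G.neighborFinset v).map Function.Embedding.inl := by
  ext (u | ⟨g, _ | _⟩) <;> simp only [SimpleGraph.mem_neighborFinset, Finset.mem_map,
    Function.Embedding.inl_apply, Sum.inl.injEq, exists_eq_right, reduceCtorEq, and_false,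
    exists_false, iff_false]
  · rfl
  · exact id
  · intro h
    exact hv (h ▸ g.2)

theorem closedNbhd_extGraphF_inl {v : V} (hv : v ∉ F) :
    closedNbhd (extGraphF G F k) (.inl v) =
      (closedNbhd G v).map Function.Embedding.inl := by
  rw [closedNbhd, closedNbhd, neighborFinset_extGraphF_inl hv, Finset.map_insert]
  rfl

theorem two_mul_le_card_closedNbhd_extGraphF_sdiff {v : V} (hv : v ∈ F) (S : Finset V) :
    2 * k ≤ (closedNbhd (extGraphF G F k) (.inl v) \ S.map Function.Embedding.inl).card := by
  let pendant : Fin (2 * k) ↪ V ⊕ ({x // x ∈ F} × (Unit ⊕ Fin (2 * k))) :=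
    (Function.Embedding.inr.trans (.sectR ⟨v, hv⟩ _)).trans Function.Embedding.inr
  calc 2 * k = (Finset.univ.map pendant).card := by simp
    _ ≤ _ := Finset.card_le_card fun x hx => by
      obtain ⟨i, -, rfl⟩ := Finset.mem_map.1 hx
      simp only [Finset.mem_sdiff, closedNbhd, Finset.mem_insert, SimpleGraph.mem_neighborFinset,
        Finset.mem_map]
      exact ⟨.inr rfl, fun ⟨_, _, h⟩ => Sum.inl_ne_inr h⟩

theorem notMem_of_isDefensiveAlliance_extGraphF_map {S : Finset V} (hSk : S.card ≤ k)
    (hS : IsDefensiveAlliance (extGraphF G F k) (S.map Function.Embedding.inl)) :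
    ∀ v ∈ S, v ∉ F := by
  intro v hvS hvF
  have hdef := hS (.inl v) (Finset.mem_map_of_mem _ hvS)
  have hout := two_mul_le_card_closedNbhd_extGraphF_sdiff (k := k) (G := G) hvF S
  have hin : (closedNbhd (extGraphF G F k) (.inl v) ∩ S.map Function.Embedding.inl).card
      ≤ S.card :=
    (Finset.card_le_card Finset.inter_subset_right).trans_eq (Finset.card_map _)
  have hpos : 0 < S.card := Finset.card_pos.2 ⟨v, hvS⟩
  omega

theorem isDefensiveAlliance_extGraphF_map_iff {S : Finset V} (hS : ∀ v ∈ S, v ∉ F) :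
    IsDefensiveAlliance (extGraphF G F k) (S.map Function.Embedding.inl) ↔
      IsDefensiveAlliance G S :=
  isDefensiveAlliance_map_iff fun v hv => closedNbhd_extGraphF_inl (hS v hv)

end ExtGraph

theorem extGraphF_defensiveAlliance_iff_general {V : Type*} [Fintype V] [DecidableEq V]
    (G : SimpleGraph V) [DecidableRel G.Adj] (F : Finset V) (k : ℕ)
    (S : Finset V) (hSk : S.card ≤ k) :
    (IsDefensiveAlliance G S ∧ ∀ x ∈ S, x ∉ F) ↔
    IsDefensiveAlliance (extGraphF G F k)
      (S.map ⟨Sum.inl, Sum.inl_injective⟩) := by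
  refine ⟨fun ⟨hS, hF⟩ => (isDefensiveAlliance_extGraphF_map_iff hF).2 hS, fun hS => ?_⟩
  have hF := notMem_of_isDefensiveAlliance_extGraphF_map hSk hS
  exact ⟨(isDefensiveAlliance_extGraphF_map_iff hF).1 hS, hF⟩

theorem extGraphF_defensiveAlliance_iff {V : Type*} [Fintype V] [DecidableEq V]
    (G : SimpleGraph V) [DecidableRel G.Adj] (F : Finset V) (k : ℕ) (hk : 1 ≤ k)
    (S : Finset V) (hS1 : 1 ≤ S.card) (hSk : S.card ≤ k) :
    (IsDefensiveAlliance G S ∧ ∀ x ∈ S, x ∉ F) ↔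
    IsDefensiveAlliance (extGraphF G F k)
      (S.map ⟨Sum.inl, Sum.inl_injective⟩) :=
  extGraphF_defensiveAlliance_iff_general G F k S hSk
end
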